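/- Let p = (p_z)_{z ∈ {0,1,2,3}^n} be a probability distribution (p_z ≥ 0, Σ_z p_z = 1). Then for every x ∈ {0,1,2,3}^n, Σ_{z ∈ {0,1,2,3}^n} p_z · 3^{−n} Σ_{s ∈ {1,2,3}^n} (−1/2)^{Σ_{j=1}^n ((s_j⋆z_j) ⊕ (s_j⋆x_j))} = p_x. In words, the empirical estimator for the error rates of a Pauli channel with error distribution p is unbiased: its expectation over a uniformly random measurement setting s ∈ {1,2,3}^n and a random Pauli error z drawn from p equals p_x. -/
import Mathlib

/-- For `s ∈ {1,2,3}` (encoded as `s : Fin 3`, Pauli label `s.succ`) and `x ∈ {0,1,2,3}`,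
`s⋆x = 0` (`false`) if the Pauli matrices `σ_s` and `σ_x` commute (i.e. `x = 0` or `x = s`)
and `s⋆x = 1` (`true`) otherwise. -/
def star1 (s : Fin 3) (x : Fin 4) : Bool := decide ¬(x = 0 ∨ x = s.succ)

lemma single_sum (z x : Fin 4) :
    ∑ s : Fin 3, (-1 / 2 : ℝ) ^ ((xor (star1 s z) (star1 s x)).toNat) =
      if z = x then 3 else 0 := by
  fin_cases z <;> fin_cases x <;> simp [star1, Fin.sum_univ_three, show (Fin.succ 2 : Fin 4) = 3 from rfl] <;> norm_num

/-- **Unbiasedness of the empirical estimator for Pauli channel error rates.**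
If `p` is a probability distribution on `{0,1,2,3}^n`, then for every `x ∈ {0,1,2,3}^n`,
`∑_z p_z · 3^{−n} ∑_{s ∈ {1,2,3}^n} (−1/2)^{∑_j (s_j⋆z_j) ⊕ (s_j⋆x_j)} = p_x`. -/
theorem pauli_channel_estimator_unbiased {n : ℕ} (p : (Fin n → Fin 4) → ℝ)
    (hp_nonneg : ∀ z, 0 ≤ p z) (hp_sum : ∑ z, p z = 1) (x : Fin n → Fin 4) :
    ∑ z : Fin n → Fin 4,
        p z * (((3 : ℝ) ^ n)⁻¹ *
          ∑ s : Fin n → Fin 3,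
            (-1 / 2 : ℝ) ^ (∑ j, (xor (star1 (s j) (z j)) (star1 (s j) (x j))).toNat)) =
      p x := by
  have key : ∀ z : Fin n → Fin 4,
      (∑ s : Fin n → Fin 3,
        (-1 / 2 : ℝ) ^ (∑ j, (xor (star1 (s j) (z j)) (star1 (s j) (x j))).toNat)) =
      if z = x then (3 : ℝ) ^ n else 0 := by
    intro z
    have : ∀ s : Fin n → Fin 3,
        (-1 / 2 : ℝ) ^ (∑ j, (xor (star1 (s j) (z j)) (star1 (s j) (x j))).toNat) =
        ∏ j, (-1 / 2 : ℝ) ^ ((xor (star1 (s j) (z j)) (star1 (s j) (x j))).toNat) := by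
      intro s; rw [Finset.prod_pow_eq_pow_sum]
    simp_rw [this]
    rw [← Fintype.prod_sum (fun j (s : Fin 3) =>
      (-1 / 2 : ℝ) ^ ((xor (star1 s (z j)) (star1 s (x j))).toNat))]
    by_cases h : z = x
    · subst h
      simp [single_sum]
    · rw [if_neg h]
      obtain ⟨j, hj⟩ := Function.ne_iff.mp h
      apply Finset.prod_eq_zero (Finset.mem_univ j)
      rw [single_sum, if_neg hj]
  calc ∑ z : Fin n → Fin 4,
        p z * (((3 : ℝ) ^ n)⁻¹ *
          ∑ s : Fin n → Fin 3,
            (-1 / 2 : ℝ) ^ (∑ j, (xor (star1 (s j) (z j)) (star1 (s j) (x j))).toNat))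
      = ∑ z : Fin n → Fin 4, if z = x then p z else 0 := by
        apply Finset.sum_congr rfl
        intro z _
        rw [key z]
        split_ifs <;> simp [mul_comm]
    _ = p x := by simp
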